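/- Let S be a consistent monad on Set, Y a set, f : Y → Y a function, and y ∈ SY \ range(η_Y) with Sf(y) ≠ y. Let X be a set admitting a split injection m : Y → X (with retraction e : X → Y). Then there exists x ∈ SX \ range(η_X) such that for the two coproduct injections v₁, v₂ : X → X + X one has Sv₁(x) ≠ Sv₂(x). -/

import Mathlib

/-- A functor on the category of sets. -/
structure SetFunctor where
  obj : Type → Type
  map : ∀ {X Y : Type}, (X → Y) → obj X → obj Y
  map_id : ∀ (X : Type), map (id : X → X) = id
  map_comp : ∀ {X Y Z : Type} (f : X → Y) (g : Y → Z), map (g ∘ f) = map g ∘ map f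

/-- A monad on the category of sets. -/
structure SetMonad extends SetFunctor where
  unit : ∀ (X : Type), X → obj X
  mult : ∀ (X : Type), obj (obj X) → obj X
  unit_natural : ∀ {X Y : Type} (f : X → Y) (x : X), map f (unit X x) = unit Y (f x)
  mult_natural : ∀ {X Y : Type} (f : X → Y) (p : obj (obj X)),
      map f (mult X p) = mult Y (map (map f) p)
  left_unit : ∀ (X : Type) (p : obj X), mult X (unit (obj X) p) = p
  right_unit : ∀ (X : Type) (p : obj X), mult X (map (unit X) p) = p
  assoc : ∀ (X : Type) (p : obj (obj (obj X))),
      mult X (mult (obj X) p) = mult X (map (mult X) p)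

/-!
Take `x = S m y`. If `S inl x = S inr x`, applying `S` of the copairing `[id, m ∘ f ∘ e]` gives
`x = S (m ∘ f ∘ e) x = S m (S f y)`, so `y = S f y` because `S m` has the left inverse `S e`.
The same left inverse shows that `x` is not a unit, since `S e` carries `η` to `η`.
-/

namespace SetFunctor

variable (F : SetFunctor) {X Y Z : Type}

theorem map_map (g : Y → Z) (h : X → Y) (x : F.obj X) :
    F.map g (F.map h x) = F.map (g ∘ h) x :=
  (congrFun (F.map_comp h g) x).symm

theorem map_leftInverse {m : Y → X} {e : X → Y} (he : Function.LeftInverse e m) :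
    Function.LeftInverse (F.map e) (F.map m) := fun y => by
  rw [map_map, he.comp_eq_id, F.map_id, id]

theorem map_inl_ne_map_inr {g : X → X} {x : F.obj X} (hgx : F.map g x ≠ x) :
    F.map (Sum.inl : X → X ⊕ X) x ≠ F.map Sum.inr x := fun h => by
  have := congrArg (F.map (Sum.elim id g)) h
  rw [map_map, map_map, Sum.elim_comp_inl, Sum.elim_comp_inr, F.map_id] at this
  exact hgx this.symm

theorem map_conj_ne {m : Y → X} {e : X → Y} (he : Function.LeftInverse e m) {f : Y → Y}
    {y : F.obj Y} (hfy : F.map f y ≠ y) : F.map (m ∘ f ∘ e) (F.map m y) ≠ F.map m y := by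
  have hconj : (m ∘ f ∘ e) ∘ m = m ∘ f := by
    rw [Function.comp_assoc, Function.comp_assoc, he.comp_eq_id, Function.comp_id]
  rw [map_map, hconj, ← map_map]
  exact fun h => hfy ((F.map_leftInverse he).injective h)

end SetFunctor

namespace SetMonad

theorem map_notMem_range_unit (S : SetMonad) {X Y : Type} {m : Y → X} {e : X → Y}
    (he : Function.LeftInverse e m) {y : S.obj Y} (hy : y ∉ Set.range (S.unit Y)) :
    S.map m y ∉ Set.range (S.unit X) := by
  rintro ⟨x, hx⟩
  exact hy ⟨e x, by rw [← S.unit_natural, hx, S.map_leftInverse he]⟩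

end SetMonad

theorem exists_element_separated_by_coproduct_injections_general (S : SetMonad)
    (Y : Type) (f : Y → Y) (y : S.obj Y)
    (hy : y ∉ Set.range (S.unit Y)) (hfy : S.map f y ≠ y)
    (X : Type) (m : Y → X) (e : X → Y) (he : e ∘ m = id) :
    ∃ x : S.obj X, x ∉ Set.range (S.unit X) ∧
      S.map (Sum.inl : X → X ⊕ X) x ≠ S.map (Sum.inr : X → X ⊕ X) x := by
  have hleft : Function.LeftInverse e m := congrFun he
  exact ⟨S.map m y, S.map_notMem_range_unit hleft hy,
    S.map_inl_ne_map_inr (S.map_conj_ne hleft hfy)⟩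

/-- Let `S` be a consistent monad on Set, `y ∈ S Y \ range η_Y` with `S f (y) ≠ y`
for some `f : Y → Y`, and `m : Y → X` a split injection with retraction `e`.  Then
there is `x ∈ S X \ range η_X` whose images under the two coproduct injections
`X → X + X` differ. -/
theorem exists_element_separated_by_coproduct_injections (S : SetMonad)
    (hcons : ∀ X : Type, Function.Injective (S.unit X))
    (Y : Type) (f : Y → Y) (y : S.obj Y)
    (hy : y ∉ Set.range (S.unit Y)) (hfy : S.map f y ≠ y)
    (X : Type) (m : Y → X) (e : X → Y) (he : e ∘ m = id) :
    ∃ x : S.obj X, x ∉ Set.range (S.unit X) ∧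
      S.map (Sum.inl : X → X ⊕ X) x ≠ S.map (Sum.inr : X → X ⊕ X) x :=
  exists_element_separated_by_coproduct_injections_general S Y f y hy hfy X m e he
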